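/- Equality constraints are equivalent to Sinkhorn marginal constraints: let l ≥ 1, e ∈ ℝ_{≥0}^l and f ≥ 0, and define u_e = (e_1, …, e_l, 0) ∈ ℝ_{≥0}^{l+1} and v_e = (f, Σ_{i=1}^l e_i − f). Then a vector x ∈ [0,1]^l satisfies Σ_{i=1}^l e_i x_i = f if and only if there exists a matrix Γ ∈ [0,1]^{2×(l+1)} with Γ_{1,i} = x_i for i = 1,…,l, Σ_{r=1}^2 Γ_{r,j} = 1 for every column j, Σ_{j=1}^{l+1} Γ_{1,j} u_{e,j} = f, and Σ_{j=1}^{l+1} Γ_{2,j} u_{e,j} = Σ_{i=1}^l e_i − f. -/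

import Mathlib

/-! Because the dummy column has weight `0`, the weighted first-row sum of any admissible `Γ` is
`Σ e_i x_i`, which gives one direction. Conversely, take the first row to be `x` extended by `0`
and the second row its complement `1 - x`: the column sums are `1`, and the weighted second-row
sum is `Σ e_i - Σ e_i x_i = Σ e_i - f`. -/

theorem sum_mul_snoc_zero {R : Type*} [CommSemiring R] {n : ℕ} (g : Fin (n + 1) → R)
    (e : Fin n → R) :
    ∑ j, g j * (Fin.snoc e 0 : Fin (n + 1) → R) j = ∑ i, g i.castSucc * e i := by
  simp [Fin.sum_univ_castSucc]

section ComplementRows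

variable {R : Type*} [Ring R] {n : ℕ}

def complementRows (y : Fin n → R) : Matrix (Fin 2) (Fin n) R :=
  Matrix.of ![y, 1 - y]

@[simp]
theorem complementRows_zero (y : Fin n → R) (j : Fin n) : complementRows y 0 j = y j := rfl

@[simp]
theorem complementRows_one (y : Fin n → R) (j : Fin n) : complementRows y 1 j = 1 - y j := rfl

theorem sum_complementRows (y : Fin n → R) (j : Fin n) : ∑ r, complementRows y r j = 1 := by
  simp [Fin.sum_univ_two]

theorem complementRows_mem_Icc [PartialOrder R] [IsOrderedRing R] {y : Fin n → R}
    (hy : ∀ j, y j ∈ Set.Icc (0 : R) 1) (r : Fin 2) (j : Fin n) :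
    complementRows y r j ∈ Set.Icc (0 : R) 1 := by
  fin_cases r
  · exact hy j
  · exact ⟨sub_nonneg.2 (hy j).2, sub_le_self _ (hy j).1⟩

end ComplementRows

theorem snoc_mem_Icc {α : Type*} [Preorder α] {n : ℕ} {a b c : α} {x : Fin n → α}
    (hx : ∀ i, x i ∈ Set.Icc a b) (hc : c ∈ Set.Icc a b) (j : Fin (n + 1)) :
    (Fin.snoc x c : Fin (n + 1) → α) j ∈ Set.Icc a b := by
  induction j using Fin.lastCases with
  | last => simpa using hc
  | cast i => simpa using hx i

theorem stmt13_general
    {l : ℕ}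
    (e : Fin l → ℝ) (f : ℝ)
    (x : Fin l → ℝ) (hx : ∀ i, x i ∈ Set.Icc (0 : ℝ) 1) :
    (∑ i, e i * x i = f) ↔
      ∃ Γ : Matrix (Fin 2) (Fin (l + 1)) ℝ,
        (∀ r j, Γ r j ∈ Set.Icc (0 : ℝ) 1) ∧
        (∀ i : Fin l, Γ 0 i.castSucc = x i) ∧
        (∀ j, ∑ r, Γ r j = 1) ∧
        (∑ j, Γ 0 j * (Fin.snoc e (0 : ℝ) : Fin (l + 1) → ℝ) j = f) ∧
        (∑ j, Γ 1 j * (Fin.snoc e (0 : ℝ) : Fin (l + 1) → ℝ) j = (∑ i, e i) - f) := by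
  simp only [sum_mul_snoc_zero]
  constructor
  · rintro rfl
    refine ⟨complementRows (Fin.snoc x 0),
      complementRows_mem_Icc (snoc_mem_Icc hx (by simp)), fun i => by simp,
      sum_complementRows _, ?_, ?_⟩
    · simp [mul_comm]
    · simp only [complementRows_one, Fin.snoc_castSucc, sub_mul, one_mul, Finset.sum_sub_distrib,
        mul_comm (x _)]
  · rintro ⟨Γ, -, hrow, -, hfirst, -⟩
    simpa only [hrow, mul_comm] using hfirst

/-- LinSAT encoding of an equality constraint: x ∈ [0,1]^l satisfies Σ e_i x_i = f iff the
Sinkhorn marginal constraints with column marginals u_e = (e_1, …, e_l, 0) and row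
marginals v_e = (f, Σ e_i − f) are satisfiable by some Γ ∈ [0,1]^{2×(l+1)} whose first row
restricted to the first l columns is x. -/
theorem stmt13
    {l : ℕ} (hl : 0 < l)
    (e : Fin l → ℝ) (he : ∀ i, 0 ≤ e i) (f : ℝ) (hf : 0 ≤ f)
    (x : Fin l → ℝ) (hx : ∀ i, x i ∈ Set.Icc (0 : ℝ) 1) :
    (∑ i, e i * x i = f) ↔
      ∃ Γ : Matrix (Fin 2) (Fin (l + 1)) ℝ,
        (∀ r j, Γ r j ∈ Set.Icc (0 : ℝ) 1) ∧
        (∀ i : Fin l, Γ 0 i.castSucc = x i) ∧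
        (∀ j, ∑ r, Γ r j = 1) ∧
        (∑ j, Γ 0 j * (Fin.snoc e (0 : ℝ) : Fin (l + 1) → ℝ) j = f) ∧
        (∑ j, Γ 1 j * (Fin.snoc e (0 : ℝ) : Fin (l + 1) → ℝ) j = (∑ i, e i) - f) :=
  stmt13_general e f x hx
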